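/- arXiv:2202.10379 — 5 statements merged into one kernel-verified Lean document; each statement's English description precedes it below -/
import Mathlib

section
/- Let d ≥ 3 and H be integers with 2H ≥ d + 3 (equivalently, H = ⌈d/2⌉ + k with k ≥ 2 when d is even and k ≥ 1 when d is odd). Let G be a d-regular simple graph on a finite vertex set V with n = |V|, and let ε > 0 be such that every nonempty S ⊆ V with |S| ≤ εn satisfies |∂S| > 2(d − H)·|S|. Then any two H-assortative assignments x, x' : V → {−1,+1} either agree at every vertex or differ at more than εn vertices. -/
/-- The edge boundary of a vertex set `S`: the set of edges of `G` with exactly one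
endpoint in `S`. -/
def edgeBoundary {V : Type*} [Fintype V] [DecidableEq V]
    (G : SimpleGraph V) [DecidableRel G.Adj] (S : Finset V) : Finset (Sym2 V) :=
  G.edgeFinset.filter (fun e => ∃ a, ∃ b, e = s(a, b) ∧ a ∈ S ∧ b ∉ S)

/-!
Let `S` be the set where two `H`-assortative assignments `x, x'` differ and `i ∈ S`.
A neighbour `j ∉ S` satisfies `x j = x' j` while `x i ≠ x' i`, so it counts towards the
assortativity of at most one of `x, x'` at `i`. Summing over the `d` neighbours,
`2H + #(neighbours of i outside S) ≤ 2d`, hence `|∂S| ≤ 2(d - H)|S|`, which the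
expansion hypothesis forbids when `0 < |S| ≤ εn`.
-/

open Finset

section

variable {V : Type*} [Fintype V] [DecidableEq V] (G : SimpleGraph V) [DecidableRel G.Adj]

theorem card_edgeBoundary_le_sum_card_neighborFinset_filter_notMem (S : Finset V) :
    #(edgeBoundary G S) ≤ ∑ i ∈ S, #((G.neighborFinset i).filter (· ∉ S)) := by
  rw [← card_sigma]
  refine (card_le_card fun e he => ?_).trans
    (card_image_le (f := fun p : (_ : V) × V => s(p.1, p.2)))
  obtain ⟨he, a, b, rfl, ha, hb⟩ := mem_filter.mp he
  rw [SimpleGraph.mem_edgeFinset, SimpleGraph.mem_edgeSet] at he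
  exact mem_image.mpr ⟨⟨a, b⟩, by simp [ha, hb, he], rfl⟩

theorem card_filter_eq_add_card_filter_eq_add_card_filter_notMem_le_two_mul_degree
    {α : Type*} [DecidableEq α] (x x' : V → α) {S : Finset V} (hS : ∀ j ∉ S, x j = x' j)
    {i : V} (hi : x i ≠ x' i) :
    #((G.neighborFinset i).filter fun j => x j = x i) +
        #((G.neighborFinset i).filter fun j => x' j = x' i) +
        #((G.neighborFinset i).filter (· ∉ S)) ≤ 2 * G.degree i := by
  rw [← G.card_neighborFinset_eq_degree, mul_comm, ← smul_eq_mul, ← sum_const]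
  simp only [card_filter, ← sum_add_distrib]
  refine sum_le_sum fun j _ => ?_
  by_cases hj : j ∈ S
  · split_ifs <;> simp
  · split_ifs <;> simp_all [hS j hj]

theorem card_edgeBoundary_add_two_mul_card_le_of_assortative {α : Type*} [DecidableEq α]
    {d H : ℕ} (hreg : G.IsRegularOfDegree d) (x x' : V → α)
    (hass : ∀ i, H ≤ #((G.neighborFinset i).filter fun j => x j = x i))
    (hass' : ∀ i, H ≤ #((G.neighborFinset i).filter fun j => x' j = x' i))
    {S : Finset V} (hS : ∀ j, j ∈ S ↔ x j ≠ x' j) :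
    #(edgeBoundary G S) + 2 * H * #S ≤ 2 * d * #S := by
  have hvertex : ∀ i ∈ S, #((G.neighborFinset i).filter (· ∉ S)) + 2 * H ≤ 2 * d := by
    intro i hi
    have := card_filter_eq_add_card_filter_eq_add_card_filter_notMem_le_two_mul_degree G x x'
      (fun j hj => not_not.mp (mt (hS j).mpr hj)) ((hS i).mp hi)
    have := hass i
    have := hass' i
    rw [hreg i] at *
    omega
  calc #(edgeBoundary G S) + 2 * H * #S
      ≤ ∑ i ∈ S, (#((G.neighborFinset i).filter (· ∉ S)) + 2 * H) := by
        rw [sum_add_distrib, sum_const, smul_eq_mul, mul_comm #S]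
        gcongr
        exact card_edgeBoundary_le_sum_card_neighborFinset_filter_notMem G S
    _ ≤ ∑ _i ∈ S, 2 * d := sum_le_sum hvertex
    _ = 2 * d * #S := by rw [sum_const, smul_eq_mul, mul_comm]

end

theorem stmt0_general {V : Type*} [Fintype V] [DecidableEq V]
    (G : SimpleGraph V) [DecidableRel G.Adj] (d H : ℕ)
    (hreg : G.IsRegularOfDegree d)
    (ε : ℝ)
    (hexp : ∀ S : Finset V, S.Nonempty → (S.card : ℝ) ≤ ε * (Fintype.card V) →
      (2 * ((d : ℝ) - H)) * S.card < ((edgeBoundary G S).card : ℝ))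
    (x x' : V → ℤ)
    (hass : ∀ i, H ≤ ((G.neighborFinset i).filter (fun j => x j = x i)).card)
    (hass' : ∀ i, H ≤ ((G.neighborFinset i).filter (fun j => x' j = x' i)).card) :
    (∀ i, x i = x' i) ∨
      ε * (Fintype.card V) < ((Finset.univ.filter (fun i => x i ≠ x' i)).card : ℝ) := by
  set S := univ.filter fun i => x i ≠ x' i
  rcases S.eq_empty_or_nonempty with hempty | hne
  · exact Or.inl fun i => by simpa [S] using (filter_eq_empty_iff.mp hempty) (mem_univ i)
  refine Or.inr (lt_of_not_ge fun hsmall => ?_)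
  have hbound : (#(edgeBoundary G S) : ℝ) + 2 * H * #S ≤ 2 * d * #S := by
    exact_mod_cast card_edgeBoundary_add_two_mul_card_le_of_assortative G hreg x x' hass hass'
      (by simp [S])
  linarith [hexp S hne hsmall]

/-- If `d ≥ 3`, `2H ≥ d + 3`, `G` is a `d`-regular graph on `n = |V|`
vertices, and `ε > 0` is such that every nonempty `S ⊆ V` with `|S| ≤ εn` satisfies
`|∂S| > 2(d − H)|S|`, then any two `H`-assortative assignments either agree everywhere
or differ at more than `εn` vertices. -/
theorem stmt0 {V : Type*} [Fintype V] [DecidableEq V]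
    (G : SimpleGraph V) [DecidableRel G.Adj] (d H : ℕ)
    (hd : 3 ≤ d) (hH : d + 3 ≤ 2 * H)
    (hreg : G.IsRegularOfDegree d)
    (ε : ℝ) (hε : 0 < ε)
    (hexp : ∀ S : Finset V, S.Nonempty → (S.card : ℝ) ≤ ε * (Fintype.card V) →
      (2 * ((d : ℝ) - H)) * S.card < ((edgeBoundary G S).card : ℝ))
    (x x' : V → ℤ)
    (hx : ∀ i, x i = 1 ∨ x i = -1) (hx' : ∀ i, x' i = 1 ∨ x' i = -1)
    (hass : ∀ i, H ≤ ((G.neighborFinset i).filter (fun j => x j = x i)).card)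
    (hass' : ∀ i, H ≤ ((G.neighborFinset i).filter (fun j => x' j = x' i)).card) :
    (∀ i, x i = x' i) ∨
      ε * (Fintype.card V) < ((Finset.univ.filter (fun i => x i ≠ x' i)).card : ℝ) :=
  stmt0_general G d H hreg ε hexp x x' hass hass'
end

section
/- Let G be a d-regular simple graph, let H be an integer, and let x, x' : V → {−1,+1} both be H-assortative assignments. Let S = {i ∈ V : x_i ≠ x'_i} be the set of vertices on which they differ. Then every vertex i ∈ S has at least 2H − d neighbors in S. -/
/-- If `G` is `d`-regular and `x, x'` are both `H`-assortative assignments,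
then every vertex of `S = {i : x i ≠ x' i}` has at least `2H − d` neighbors in `S`. -/
theorem stmt1 {V : Type*} [Fintype V] [DecidableEq V]
    (G : SimpleGraph V) [DecidableRel G.Adj] (d : ℕ) (H : ℤ)
    (hreg : G.IsRegularOfDegree d)
    (x x' : V → ℤ)
    (hx : ∀ i, x i = 1 ∨ x i = -1) (hx' : ∀ i, x' i = 1 ∨ x' i = -1)
    (hass : ∀ i, H ≤ (((G.neighborFinset i).filter (fun j => x j = x i)).card : ℤ))
    (hass' : ∀ i, H ≤ (((G.neighborFinset i).filter (fun j => x' j = x' i)).card : ℤ)) :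
    ∀ i ∈ Finset.univ.filter (fun i => x i ≠ x' i),
      2 * H - d ≤
        ((G.neighborFinset i ∩ Finset.univ.filter (fun j => x j ≠ x' j)).card : ℤ) := by
  intro i hi
  rw [Finset.mem_filter] at hi
  set A := (G.neighborFinset i).filter (fun j => x j = x i) with hA
  set B := (G.neighborFinset i).filter (fun j => x' j = x' i) with hB
  have hsub : A ∩ B ⊆ G.neighborFinset i ∩ Finset.univ.filter (fun j => x j ≠ x' j) := by
    intro j hj
    simp only [hA, hB, Finset.mem_inter, Finset.mem_filter, Finset.mem_univ,
      true_and] at hj ⊢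
    refine ⟨hj.1.1, ?_⟩
    rw [hj.1.2, hj.2.2]
    exact hi.2
  have hAB : A ∪ B ⊆ G.neighborFinset i := by
    intro j hj
    rcases Finset.mem_union.mp hj with h | h
    · exact (Finset.mem_filter.mp h).1
    · exact (Finset.mem_filter.mp h).1
  have hcardU : (A ∪ B).card ≤ d := by
    calc (A ∪ B).card ≤ (G.neighborFinset i).card := Finset.card_le_card hAB
    _ = d := by rw [G.card_neighborFinset_eq_degree]; exact hreg i
  have key : A.card + B.card ≤ (A ∩ B).card + d := by
    have := Finset.card_union_add_card_inter A B
    omega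
  have h1 := hass i
  have h2 := hass' i
  have hle : (A ∩ B).card ≤ (G.neighborFinset i ∩ Finset.univ.filter (fun j => x j ≠ x' j)).card :=
    Finset.card_le_card hsub
  have := @Nat.cast_le ℤ _ _ _ |>.mpr hle
  push_cast at key this ⊢
  linarith
end

section
/- Let H ≥ 3 be an integer, let δ be a real number with δ < H − 2, and let ε > 0. Let G be a d-regular simple graph on n vertices such that every nonempty S ⊆ V with |S| ≤ εn satisfies |∂S| ≥ (d − 2 − δ)·|S|. Then every H-assortative assignment x : V → {−1,+1} with both groups V_− and V_+ nonempty satisfies min(|V_−|, |V_+|) > εn; in particular no H-assortative partition with both groups nonempty has magnetization m = (|V_+| − |V_−|)/n with |m| > 1 − 2ε. -/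
lemma edgeBoundary_card_le {V : Type*} [Fintype V] [DecidableEq V]
    (G : SimpleGraph V) [DecidableRel G.Adj] (S : Finset V) (m : ℕ)
    (h : ∀ a ∈ S, ((G.neighborFinset a).filter (fun b => b ∉ S)).card ≤ m) :
    (edgeBoundary G S).card ≤ m * S.card := by
  have hsub : edgeBoundary G S ⊆
      S.biUnion (fun a => ((G.neighborFinset a).filter (fun b => b ∉ S)).image
        (fun b => s(a, b))) := by
    intro e he
    rw [edgeBoundary, Finset.mem_filter] at he
    obtain ⟨he1, a, b, rfl, haS, hbS⟩ := he
    have hadj : G.Adj a b := by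
      rw [SimpleGraph.mem_edgeFinset, SimpleGraph.mem_edgeSet] at he1
      exact he1
    refine Finset.mem_biUnion.2 ⟨a, haS, Finset.mem_image.2 ⟨b, ?_, rfl⟩⟩
    simp [hadj, hbS]
  calc (edgeBoundary G S).card ≤ _ := Finset.card_le_card hsub
    _ ≤ ∑ a ∈ S, (((G.neighborFinset a).filter (fun b => b ∉ S)).image
        (fun b => s(a, b))).card := Finset.card_biUnion_le
    _ ≤ ∑ a ∈ S, m := by
        refine Finset.sum_le_sum fun a ha => ?_
        exact (Finset.card_image_le).trans (h a ha)
    _ = m * S.card := by rw [Finset.sum_const, smul_eq_mul, mul_comm]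

/-- Let `H ≥ 3`, `δ < H − 2`, `ε > 0`, and let `G` be a `d`-regular graph
on `n` vertices in which every nonempty `S` with `|S| ≤ εn` satisfies
`|∂S| ≥ (d − 2 − δ)|S|`. Then every `H`-assortative assignment with both groups nonempty
has `min(|V₋|, |V₊|) > εn`; in particular its magnetization `m = (|V₊| − |V₋|)/n`
satisfies `|m| ≤ 1 − 2ε`. -/
theorem stmt6 {V : Type*} [Fintype V] [DecidableEq V]
    (G : SimpleGraph V) [DecidableRel G.Adj] (d H : ℕ) (hH : 3 ≤ H)
    (δ : ℝ) (hδ : δ < (H : ℝ) - 2) (ε : ℝ) (hε : 0 < ε)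
    (hreg : G.IsRegularOfDegree d)
    (hexp : ∀ S : Finset V, S.Nonempty → (S.card : ℝ) ≤ ε * (Fintype.card V) →
      ((d : ℝ) - 2 - δ) * S.card ≤ ((edgeBoundary G S).card : ℝ))
    (x : V → ℤ) (hx : ∀ i, x i = 1 ∨ x i = -1)
    (hass : ∀ i, H ≤ ((G.neighborFinset i).filter (fun j => x j = x i)).card)
    (hplus : (Finset.univ.filter (fun i => x i = 1)).Nonempty)
    (hminus : (Finset.univ.filter (fun i => x i = -1)).Nonempty) :
    ε * (Fintype.card V) <
        min ((Finset.univ.filter (fun i => x i = 1)).card : ℝ)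
          ((Finset.univ.filter (fun i => x i = -1)).card : ℝ) ∧
      |(((Finset.univ.filter (fun i => x i = 1)).card : ℝ) -
          ((Finset.univ.filter (fun i => x i = -1)).card : ℝ)) / (Fintype.card V)| ≤
        1 - 2 * ε := by
  set n := Fintype.card V with hn
  -- H ≤ d
  have hHd : H ≤ d := by
    obtain ⟨a, ha⟩ := hplus
    calc H ≤ ((G.neighborFinset a).filter (fun j => x j = x a)).card := hass a
      _ ≤ (G.neighborFinset a).card := Finset.card_filter_le _ _
      _ = d := hreg a
  -- generic group lemma
  have key : ∀ S : Finset V, S.Nonempty → (∀ a ∈ S, ∀ b, G.Adj a b → x b = x a → b ∈ S) →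
      ε * n < S.card := by
    intro S hS hclosed
    by_contra hle
    push_neg at hle
    have hexpS := hexp S hS hle
    have hdeg : ∀ a ∈ S, ((G.neighborFinset a).filter (fun b => b ∉ S)).card ≤ d - H := by
      intro a ha
      have hsub : (G.neighborFinset a).filter (fun b => b ∉ S) ⊆
          (G.neighborFinset a).filter (fun b => ¬ (x b = x a)) := by
        intro b hb
        rw [Finset.mem_filter] at hb ⊢
        refine ⟨hb.1, fun hxb => hb.2 ?_⟩
        exact hclosed a ha b ((SimpleGraph.mem_neighborFinset _ _ _).1 hb.1) hxb
      calc ((G.neighborFinset a).filter (fun b => b ∉ S)).card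
          ≤ ((G.neighborFinset a).filter (fun b => ¬ (x b = x a))).card :=
            Finset.card_le_card hsub
        _ = (G.neighborFinset a).card -
            ((G.neighborFinset a).filter (fun b => x b = x a)).card := by
            have := Finset.card_filter_add_card_filter_not
              (s := G.neighborFinset a) (p := fun b => x b = x a)
            omega
        _ ≤ d - H := by
            have h1 := hass a
            have h2 := hreg a
            have h3 : (G.neighborFinset a).card = G.degree a :=
              G.card_neighborFinset_eq_degree a
            omega
    have hbd : ((edgeBoundary G S).card : ℝ) ≤ ((d : ℝ) - H) * S.card := by
      have := edgeBoundary_card_le G S (d - H) hdeg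
      calc ((edgeBoundary G S).card : ℝ) ≤ ((d - H : ℕ) : ℝ) * S.card := by
            exact_mod_cast Nat.cast_le.2 (this.trans_eq rfl)
        _ ≤ ((d : ℝ) - H) * S.card := by
            have : ((d - H : ℕ) : ℝ) = (d : ℝ) - H := by
              rw [Nat.cast_sub hHd]
            rw [this]
    have hScard : (0 : ℝ) < S.card := by
      exact_mod_cast Finset.card_pos.2 hS
    nlinarith [hexpS.trans hbd]
  have hclosed1 : ∀ a ∈ Finset.univ.filter (fun i => x i = 1), ∀ b, G.Adj a b →
      x b = x a → b ∈ Finset.univ.filter (fun i => x i = 1) := by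
    intro a ha b _ hxb
    simp only [Finset.mem_filter, Finset.mem_univ, true_and] at ha ⊢
    rw [hxb, ha]
  have hclosed2 : ∀ a ∈ Finset.univ.filter (fun i => x i = -1), ∀ b, G.Adj a b →
      x b = x a → b ∈ Finset.univ.filter (fun i => x i = -1) := by
    intro a ha b _ hxb
    simp only [Finset.mem_filter, Finset.mem_univ, true_and] at ha ⊢
    rw [hxb, ha]
  have h1 := key _ hplus hclosed1
  have h2 := key _ hminus hclosed2
  set A := Finset.univ.filter (fun i => x i = 1)
  set B := Finset.univ.filter (fun i => x i = -1)
  have hBeq : B = Finset.univ.filter (fun i => ¬ x i = 1) := by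
    ext i
    simp only [B, Finset.mem_filter, Finset.mem_univ, true_and]
    constructor
    · intro h; rw [h]; decide
    · intro h; rcases hx i with h' | h'
      · exact absurd h' h
      · exact h'
  have hAB : A.card + B.card = n := by
    rw [hn, ← Finset.card_univ, hBeq]
    exact Finset.card_filter_add_card_filter_not (p := fun i => x i = 1)
  have hnpos : (0 : ℝ) < n := by
    have : (0:ℝ) < (A.card : ℝ) := lt_of_le_of_lt (by positivity) h1
    have := hAB
    push_cast [← this]
    have hB : (0:ℝ) ≤ (B.card : ℝ) := by positivity
    nlinarith [lt_of_le_of_lt (by positivity : (0:ℝ) ≤ ε * n) h1]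
  refine ⟨lt_min h1 h2, ?_⟩
  rw [abs_div, abs_of_pos hnpos, div_le_iff₀ hnpos]
  have hABr : (A.card : ℝ) + B.card = n := by exact_mod_cast hAB
  rcases le_total (A.card : ℝ) (B.card : ℝ) with h | h
  · rw [abs_of_nonpos (by linarith)]
    nlinarith
  · rw [abs_of_nonneg (by linarith)]
    nlinarith
end

section
/- Fix integers d ≥ 1 and H with 1 ≤ H ≤ d. Let χ be a symmetric message that is an assortative BP fixed point with parameter H, and additionally satisfies χ_{+1,−1} = χ_{−1,+1} = χ_{−x,x} for both orientations. Then the swap χ' of χ is a disassortative BP fixed point with parameter H' = d + 1 − H. -/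
noncomputable section

/-- The two spin values `{−1, +1}` as a finset of integers. -/
def spins : Finset ℤ := {-1, 1}

/-- The assortative BP map at zero chemical potential with parameter `H`:
`F^ass_H(χ)_{x,y} = Σ_{r = H − [x=y]}^{d−1} binom(d−1,r) (χ_{x,x})^r (χ_{−x,x})^{d−1−r}`. -/
def Fass (d H : ℕ) (χ : ℤ → ℤ → ℝ) (x y : ℤ) : ℝ :=
  ∑ r ∈ Finset.Icc (H - (if x = y then 1 else 0)) (d - 1),
    ((d - 1).choose r : ℝ) * (χ x x) ^ r * (χ (-x) x) ^ (d - 1 - r)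

/-- The disassortative BP map at zero chemical potential with parameter `H`:
`F^dis_H(χ)_{x,y} = Σ_{r = 0}^{H − [x=y] − 1} binom(d−1,r) (χ_{x,x})^r (χ_{−x,x})^{d−1−r}`. -/
def Fdis (d H : ℕ) (χ : ℤ → ℤ → ℝ) (x y : ℤ) : ℝ :=
  ∑ r ∈ Finset.range (H - (if x = y then 1 else 0)),
    ((d - 1).choose r : ℝ) * (χ x x) ^ r * (χ (-x) x) ^ (d - 1 - r)

/-- A message: nonnegative entries on `{−1,+1}²` summing to `1`. -/
def IsMessage (χ : ℤ → ℤ → ℝ) : Prop :=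
  (∀ x ∈ spins, ∀ y ∈ spins, 0 ≤ χ x y) ∧
    (∑ x ∈ spins, ∑ y ∈ spins, χ x y) = 1

/-- `χ` is an assortative BP fixed point with parameter `H`:
`T = Σ_{x,y} F^ass_H(χ)_{x,y} > 0` and `χ_{x,y} = F^ass_H(χ)_{x,y} / T`. -/
def IsAssFP (d H : ℕ) (χ : ℤ → ℤ → ℝ) : Prop :=
  0 < (∑ x ∈ spins, ∑ y ∈ spins, Fass d H χ x y) ∧
    ∀ x ∈ spins, ∀ y ∈ spins,
      χ x y = Fass d H χ x y / (∑ x' ∈ spins, ∑ y' ∈ spins, Fass d H χ x' y')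

/-- `χ` is a disassortative BP fixed point with parameter `H`:
`T = Σ_{x,y} F^dis_H(χ)_{x,y} > 0` and `χ_{x,y} = F^dis_H(χ)_{x,y} / T`. -/
def IsDisFP (d H : ℕ) (χ : ℤ → ℤ → ℝ) : Prop :=
  0 < (∑ x ∈ spins, ∑ y ∈ spins, Fdis d H χ x y) ∧
    ∀ x ∈ spins, ∀ y ∈ spins,
      χ x y = Fdis d H χ x y / (∑ x' ∈ spins, ∑ y' ∈ spins, Fdis d H χ x' y')

/-- The swap of a message `χ`: `χ'_{x,x} = χ_{−x,x}` and `χ'_{−x,x} = χ_{x,x}`. -/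
def swapMsg (χ : ℤ → ℤ → ℝ) (x y : ℤ) : ℝ :=
  if x = y then χ (-x) x else χ y y

lemma key (n m : ℕ) (hm : m ≤ n + 1) (a b : ℝ) :
    ∑ r ∈ Finset.range m, ((n.choose r : ℝ)) * b ^ r * a ^ (n - r)
      = ∑ r ∈ Finset.Icc (n + 1 - m) n, ((n.choose r : ℝ)) * a ^ r * b ^ (n - r) := by
  refine Finset.sum_nbij' (i := fun r => n - r) (j := fun r => n - r) ?_ ?_ ?_ ?_ ?_
  · intro r hr
    simp only [Finset.mem_range] at hr
    simp only [Finset.mem_Icc]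
    omega
  · intro r hr
    simp only [Finset.mem_Icc] at hr
    simp only [Finset.mem_range]
    omega
  · intro r hr
    simp only [Finset.mem_range] at hr
    show n - (n - r) = r
    omega
  · intro r hr
    simp only [Finset.mem_Icc] at hr
    show n - (n - r) = r
    omega
  · intro r hr
    simp only [Finset.mem_range] at hr
    have h1 : r ≤ n := by omega
    show ((n.choose r : ℝ)) * b ^ r * a ^ (n - r)
        = ((n.choose (n - r) : ℝ)) * a ^ (n - r) * b ^ (n - (n - r))
    rw [Nat.choose_symm h1, Nat.sub_sub_self h1]
    ring


/-- For `d ≥ 1`, `1 ≤ H ≤ d`, if `χ` is a symmetric message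
(`χ_{+1,+1} = χ_{−1,−1}` and `χ_{+1,−1} = χ_{−1,+1} = χ_{−x,x}` for both orientations)
that is an assortative BP fixed point with parameter `H`, then the swap `χ'` of `χ` is a
disassortative BP fixed point with parameter `H' = d + 1 − H`. -/
theorem stmt11 (d H : ℕ) (hd : 1 ≤ d) (hH1 : 1 ≤ H) (hHd : H ≤ d)
    (χ : ℤ → ℤ → ℝ) (hmsg : IsMessage χ)
    (hsym : χ 1 1 = χ (-1) (-1) ∧ χ 1 (-1) = χ (-1) 1)
    (hfp : IsAssFP d H χ) :
    IsDisFP d (d + 1 - H) (swapMsg χ) := by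
  obtain ⟨hs1, hs2⟩ := hsym
  obtain ⟨hT, hfix⟩ := hfp
  have hne : (-1 : ℤ) ≠ 1 := by norm_num
  have hm1 : (-1 : ℤ) ∈ spins := by simp [spins]
  have h1s : (1 : ℤ) ∈ spins := by simp [spins]
  set a : ℝ := χ 1 1 with ha
  set b : ℝ := χ (-1) 1 with hb
  have hχmm : χ (-1) (-1) = a := hs1.symm
  have hχ1m : χ 1 (-1) = b := hs2
  set D : ℝ := ∑ r ∈ Finset.Icc (H - 1) (d - 1),
      ((d - 1).choose r : ℝ) * a ^ r * b ^ (d - 1 - r) with hD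
  set O : ℝ := ∑ r ∈ Finset.Icc H (d - 1),
      ((d - 1).choose r : ℝ) * a ^ r * b ^ (d - 1 - r) with hO
  -- Fass values
  have F11 : Fass d H χ 1 1 = D := by
    simp [Fass, hD, ← ha, ← hb]
  have Fmm : Fass d H χ (-1) (-1) = D := by
    simp [Fass, hD, hχmm, hχ1m]
  have F1m : Fass d H χ 1 (-1) = O := by
    simp [Fass, hO, hne.symm, ← ha, ← hb]
  have Fm1 : Fass d H χ (-1) 1 = O := by
    simp [Fass, hO, hne, hχmm, hχ1m]
  -- total
  have hTval : (∑ x ∈ spins, ∑ y ∈ spins, Fass d H χ x y) = D + O + (O + D) := by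
    rw [show spins = ({-1, 1} : Finset ℤ) from rfl]
    rw [Finset.sum_pair hne, Finset.sum_pair hne, Finset.sum_pair hne]
    rw [F11, Fmm, F1m, Fm1]
  set T : ℝ := ∑ x ∈ spins, ∑ y ∈ spins, Fass d H χ x y with hTdef
  -- chi values
  have hav : a = D / T := by rw [ha]; rw [hfix 1 h1s 1 h1s, F11]
  have hbv : b = O / T := by rw [hb]; rw [hfix (-1) hm1 1 h1s, Fm1]
  -- swap values
  have sw11 : swapMsg χ 1 1 = b := by simp [swapMsg, hb]
  have swmm : swapMsg χ (-1) (-1) = b := by simp [swapMsg, hχ1m]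
  have sw1m : swapMsg χ 1 (-1) = a := by simp [swapMsg, hne.symm, hχmm]
  have swm1 : swapMsg χ (-1) 1 = a := by simp [swapMsg, hne, ha]
  -- Fdis values
  have hn : d - 1 + 1 = d := by omega
  have G11 : Fdis d (d + 1 - H) (swapMsg χ) 1 1 = O := by
    unfold Fdis
    simp only [if_pos rfl, if_true, sw11]
    rw [show swapMsg χ (-1) 1 = a from swm1]
    rw [key (d - 1) (d + 1 - H - 1) (by omega) a b]
    rw [show d - 1 + 1 - (d + 1 - H - 1) = H by omega]
  have Gmm : Fdis d (d + 1 - H) (swapMsg χ) (-1) (-1) = O := by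
    unfold Fdis
    simp only [if_pos rfl, if_true, neg_neg, swmm]
    rw [show swapMsg χ 1 (-1) = a from sw1m]
    rw [key (d - 1) (d + 1 - H - 1) (by omega) a b]
    rw [show d - 1 + 1 - (d + 1 - H - 1) = H by omega]
  have G1m : Fdis d (d + 1 - H) (swapMsg χ) 1 (-1) = D := by
    unfold Fdis
    simp only [if_neg hne.symm, sw11]
    rw [show swapMsg χ (-1) 1 = a from swm1]
    rw [show d + 1 - H - 0 = d + 1 - H by omega]
    rw [key (d - 1) (d + 1 - H) (by omega) a b]
    rw [show d - 1 + 1 - (d + 1 - H) = H - 1 by omega]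
  have Gm1 : Fdis d (d + 1 - H) (swapMsg χ) (-1) 1 = D := by
    unfold Fdis
    simp only [if_neg hne, neg_neg, swmm]
    rw [show swapMsg χ 1 (-1) = a from sw1m]
    rw [show d + 1 - H - 0 = d + 1 - H by omega]
    rw [key (d - 1) (d + 1 - H) (by omega) a b]
    rw [show d - 1 + 1 - (d + 1 - H) = H - 1 by omega]
  have hT'val : (∑ x ∈ spins, ∑ y ∈ spins, Fdis d (d + 1 - H) (swapMsg χ) x y)
      = D + O + (O + D) := by
    rw [show spins = ({-1, 1} : Finset ℤ) from rfl]
    rw [Finset.sum_pair hne, Finset.sum_pair hne, Finset.sum_pair hne]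
    rw [G11, Gmm, G1m, Gm1]
    ring
  have hTT : (∑ x ∈ spins, ∑ y ∈ spins, Fdis d (d + 1 - H) (swapMsg χ) x y) = T := by
    rw [hT'val]; exact hTval.symm
  constructor
  · rw [hTT]; exact hT
  · intro x hx y hy
    rw [hTT]
    simp only [spins, Finset.mem_insert, Finset.mem_singleton] at hx hy
    rcases hx with hx | hx <;> rcases hy with hy | hy <;> subst hx <;> subst hy
    · rw [swmm, Gmm]; exact hbv
    · rw [swm1, Gm1]; exact hav
    · rw [sw1m, G1m]; exact hav
    · rw [sw11, G11]; exact hbv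
end
end

section
/- Fix integers d ≥ 2 and H with 1 ≤ H ≤ d. Let p ∈ (0,1) be a real number and let χ be the symmetric message with χ_{+1,+1} = χ_{−1,−1} = p/2 and χ_{+1,−1} = χ_{−1,+1} = (1−p)/2. Define A1 = Σ_{i=H}^{d−1} binom(d−1, i) p^i (1−p)^{d−1−i} and A2 = binom(d−1, H−1) p^{H−1} (1−p)^{d−H}. Then χ is an assortative BP fixed point with parameter H if and only if p = (A1 + A2)/(2·A1 + A2). -/
noncomputable section

lemma sum_scaled (n a : ℕ) (p : ℝ) :
    ∑ r ∈ Finset.Icc a n, ((n.choose r : ℝ) * (p / 2) ^ r * ((1 - p) / 2) ^ (n - r))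
      = (∑ r ∈ Finset.Icc a n, ((n.choose r : ℝ) * p ^ r * (1 - p) ^ (n - r))) / 2 ^ n := by
  rw [Finset.sum_div]
  refine Finset.sum_congr rfl fun r hr => ?_
  have hrn : r ≤ n := (Finset.mem_Icc.mp hr).2
  have h2 : (2 : ℝ) ^ r * 2 ^ (n - r) = 2 ^ n := by
    rw [← pow_add]; congr 1; omega
  calc ((n.choose r : ℝ) * (p / 2) ^ r * ((1 - p) / 2) ^ (n - r))
      = (n.choose r : ℝ) * p ^ r * (1 - p) ^ (n - r) / (2 ^ r * 2 ^ (n - r)) := by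
        rw [div_pow, div_pow]; ring
    _ = (n.choose r : ℝ) * p ^ r * (1 - p) ^ (n - r) / 2 ^ n := by rw [h2]

/-- Fix `d ≥ 2` and `1 ≤ H ≤ d`, let `p ∈ (0,1)`, and let `χ` be the
symmetric message with `χ_{+1,+1} = χ_{−1,−1} = p/2` and
`χ_{+1,−1} = χ_{−1,+1} = (1−p)/2`. With
`A1 = Σ_{i=H}^{d−1} binom(d−1,i) p^i (1−p)^{d−1−i}` and
`A2 = binom(d−1,H−1) p^{H−1} (1−p)^{d−H}`, the message `χ` is an assortative BP fixed
point with parameter `H` if and only if `p = (A1 + A2)/(2·A1 + A2)`. -/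
theorem stmt14 (d H : ℕ) (hd : 2 ≤ d) (hH1 : 1 ≤ H) (hHd : H ≤ d)
    (p : ℝ) (hp : p ∈ Set.Ioo (0 : ℝ) 1) :
    IsAssFP d H (fun x y => if x = y then p / 2 else (1 - p) / 2) ↔
      p = ((∑ i ∈ Finset.Icc H (d - 1),
              ((d - 1).choose i : ℝ) * p ^ i * (1 - p) ^ (d - 1 - i)) +
            ((d - 1).choose (H - 1) : ℝ) * p ^ (H - 1) * (1 - p) ^ (d - H)) /
          (2 * (∑ i ∈ Finset.Icc H (d - 1),
              ((d - 1).choose i : ℝ) * p ^ i * (1 - p) ^ (d - 1 - i)) +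
            ((d - 1).choose (H - 1) : ℝ) * p ^ (H - 1) * (1 - p) ^ (d - H)) := by
  obtain ⟨hp0, hp1⟩ := hp
  have h1p : (0 : ℝ) < 1 - p := by linarith
  set χ : ℤ → ℤ → ℝ := fun x y => if x = y then p / 2 else (1 - p) / 2 with hχ
  set A1 : ℝ := ∑ i ∈ Finset.Icc H (d - 1),
      ((d - 1).choose i : ℝ) * p ^ i * (1 - p) ^ (d - 1 - i) with hA1
  set A2 : ℝ := ((d - 1).choose (H - 1) : ℝ) * p ^ (H - 1) * (1 - p) ^ (d - H) with hA2
  have hχxx : ∀ x : ℤ, χ x x = p / 2 := fun x => by simp [hχ]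
  have hχnx : ∀ x : ℤ, x ∈ spins → χ (-x) x = (1 - p) / 2 := by
    intro x hx
    have : x = -1 ∨ x = 1 := by simpa [spins] using hx
    rcases this with h | h <;> subst h <;> norm_num [hχ]
  have hdiag : ∀ x : ℤ, x ∈ spins → Fass d H χ x x = (A1 + A2) / 2 ^ (d - 1) := by
    intro x hx
    have hins : Finset.Icc (H - 1) (d - 1) = insert (H - 1) (Finset.Icc H (d - 1)) := by
      ext r; simp only [Finset.mem_Icc, Finset.mem_insert]; omega
    have hnot : H - 1 ∉ Finset.Icc H (d - 1) := by
      simp only [Finset.mem_Icc]; omega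
    have hdH : d - 1 - (H - 1) = d - H := by omega
    rw [Fass]
    simp only [if_pos rfl, if_true, eq_self_iff_true, hχxx, hχnx x hx]
    rw [sum_scaled, hins, Finset.sum_insert hnot, hdH, hA1, hA2]
    ring
  have hoff : ∀ x y : ℤ, x ∈ spins → x ≠ y → Fass d H χ x y = A1 / 2 ^ (d - 1) := by
    intro x y hx hxy
    rw [Fass]
    simp only [if_neg hxy, Nat.sub_zero, hχxx, hχnx x hx]
    rw [sum_scaled, hA1]
  have hm1 : (-1 : ℤ) ∈ spins := by simp [spins]
  have hp1' : (1 : ℤ) ∈ spins := by simp [spins]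
  have hne : (-1 : ℤ) ≠ 1 := by decide
  have hTval : (∑ x ∈ spins, ∑ y ∈ spins, Fass d H χ x y)
      = 2 * (2 * A1 + A2) / 2 ^ (d - 1) := by
    rw [show spins = {-1, 1} from rfl,
      Finset.sum_pair hne, Finset.sum_pair hne, Finset.sum_pair hne,
      hdiag (-1) hm1, hdiag 1 hp1', hoff (-1) 1 hm1 (by decide),
      hoff 1 (-1) hp1' (by decide)]
    ring
  have hA1nn : 0 ≤ A1 := by
    rw [hA1]
    refine Finset.sum_nonneg fun i _ => ?_
    positivity
  have hA2pos : 0 < A2 := by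
    have hc : 0 < ((d - 1).choose (H - 1) : ℝ) := by
      exact_mod_cast Nat.choose_pos (by omega : H - 1 ≤ d - 1)
    rw [hA2]; positivity
  have ht : (0 : ℝ) < 2 * A1 + A2 := by linarith
  have h2d : (0 : ℝ) < 2 ^ (d - 1) := by positivity
  have hsimp : ∀ a : ℝ, (a / 2 ^ (d - 1)) / (2 * (2 * A1 + A2) / 2 ^ (d - 1))
      = a / (2 * (2 * A1 + A2)) := by
    intro a
    rw [div_div_div_comm, div_self h2d.ne', div_one]
  constructor
  · rintro ⟨hTpos, hfix⟩
    have h11 := hfix 1 hp1' 1 hp1'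
    rw [hdiag 1 hp1', hTval, hsimp, hχxx] at h11
    rw [eq_div_iff ht.ne']
    rw [div_eq_div_iff (by norm_num) (by positivity)] at h11
    linarith
  · intro hpeq
    have hkey : p * (2 * A1 + A2) = A1 + A2 := by
      rw [hpeq]; field_simp
    refine ⟨by rw [hTval]; positivity, ?_⟩
    intro x hx y hy
    rw [hTval]
    by_cases hxy : x = y
    · subst hxy
      rw [hdiag x hx, hsimp]
      show χ x x = _
      rw [hχxx, div_eq_div_iff (by norm_num) (by positivity)]
      linarith
    · rw [hoff x y hx hxy, hsimp]
      show χ x y = _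
      have : χ x y = (1 - p) / 2 := by simp [hχ, hxy]
      rw [this, div_eq_div_iff (by norm_num) (by positivity)]
      nlinarith [hkey]
end
end
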